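/- Let q ≥ 2 and c, C ≥ 0 be real numbers, and let (a_s)_{s ∈ ℤ_{≥0}} be a nonincreasing sequence of nonnegative real numbers with a₀ ≤ c. Suppose there exists an integer m such that a_s ≤ q⁻¹·a_{s−1} + C·q^{−s} for every integer s with 2 ≤ s ≤ m−1, and a_s ≤ q⁻¹·a_{s−1} for every integer s ≥ m+2. Then a_s ≤ (cq + C)·(s+1)·q^{2−s} for every integer s ≥ 0. -/

import Mathlib

/-!
Rescale to `u s = q ^ s * a s`. The recursion `a s ≤ q⁻¹ a (s - 1) + C q⁻ˢ` becomes
`u s ≤ u (s - 1) + C`, and at the steps where no recursion is available, monotonicity of `a`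
still gives `u s ≤ q * u (s - 1)`. Starting from `u 1 ≤ q * c`, at most two exceptional steps
(`s = m, m + 1`) occur after `s = 1`, so `u s ≤ q ^ 2 * (c * q + C * s)`.
-/

open Finset

theorem le_prod_mul_of_le_mul_add {R : Type*} [CommRing R] [LinearOrder R] [IsStrictOrderedRing R]
    {u r : ℕ → R} {C : R} (hC : 0 ≤ C) (hr : ∀ n, 1 ≤ r n)
    (h : ∀ n, u (n + 1) ≤ r n * (u n + C)) (n : ℕ) :
    u n ≤ (∏ k ∈ range n, r k) * (u 0 + C * n) := by
  induction n with
  | zero => simp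
  | succ n ih =>
    have hP : 1 ≤ ∏ k ∈ range n, r k := one_le_prod fun k _ => hr k
    calc u (n + 1) ≤ r n * (u n + C) := h n
      _ ≤ r n * ((∏ k ∈ range n, r k) * (u 0 + C * n) + (∏ k ∈ range n, r k) * C) := by
          gcongr
          · exact zero_le_one.trans (hr n)
          · exact le_mul_of_one_le_left hC hP
      _ = (∏ k ∈ range (n + 1), r k) * (u 0 + C * ↑(n + 1)) := by
          rw [prod_range_succ]; push_cast; ring

theorem Finset.prod_ite_mem_le_pow_card {R : Type*} [CommMonoidWithZero R] [PartialOrder R]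
    [ZeroLEOneClass R] [PosMulMono R] {ι : Type*} [DecidableEq ι] (s t : Finset ι) {q : R}
    (hq : 1 ≤ q) : ∏ i ∈ s, (if i ∈ t then q else 1) ≤ q ^ #t := by
  rw [prod_ite_mem, prod_const]
  exact pow_le_pow_right₀ hq (card_le_card inter_subset_right)

theorem pow_succ_mul_le_of_le_inv_mul_add {q C : ℝ} {a : ℕ → ℝ} (hq : 0 < q) {n : ℕ}
    (h : a (n + 1) ≤ q⁻¹ * a n + C * q ^ (-((n + 1 : ℕ) : ℝ))) :
    q ^ (n + 1) * a (n + 1) ≤ q ^ n * a n + C := by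
  rw [Real.rpow_neg hq.le, Real.rpow_natCast] at h
  calc q ^ (n + 1) * a (n + 1) ≤ q ^ (n + 1) * (q⁻¹ * a n + C * (q ^ (n + 1))⁻¹) := by
        gcongr
    _ = q ^ n * a n + C := by field_simp; ring

section Recursion

variable {q c C : ℝ} {a : ℕ → ℝ} {m : ℤ} (hC : 0 ≤ C) (ha_anti : ∀ s, a (s + 1) ≤ a s)
  (hlow : ∀ s : ℕ, 2 ≤ s → (s : ℤ) ≤ m - 1 → a s ≤ q⁻¹ * a (s - 1) + C * q ^ (-(s : ℝ)))
  (hhigh : ∀ s : ℕ, m + 2 ≤ (s : ℤ) → a s ≤ q⁻¹ * a (s - 1))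
include hC ha_anti hlow hhigh

-- `n ∈ {(m - 2).toNat, (m - 1).toNat}` holds whenever `n + 2 ∈ {m, m + 1}` (and possibly for
-- `n = 0` when `m < 2`, which costs nothing)
theorem pow_mul_le_ite_mul_add_of_recursion (hq : 0 < q) (n : ℕ) :
    q ^ (n + 2) * a (n + 2) ≤
      (if n ∈ ({(m - 2).toNat, (m - 1).toNat} : Finset ℕ) then q else 1) *
        (q ^ (n + 1) * a (n + 1) + C) := by
  split_ifs with hn
  · calc q ^ (n + 2) * a (n + 2) ≤ q ^ (n + 2) * a (n + 1) := by gcongr; exact ha_anti _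
      _ = q * (q ^ (n + 1) * a (n + 1)) := by ring
      _ ≤ q * (q ^ (n + 1) * a (n + 1) + C) := by gcongr; linarith
  · have hrange : (n + 2 : ℤ) ≤ m - 1 ∨ m + 2 ≤ (n + 2 : ℤ) := by
      simp only [mem_insert, mem_singleton] at hn; omega
    rw [one_mul]
    apply pow_succ_mul_le_of_le_inv_mul_add hq
    rcases hrange with hbelow | habove
    · exact hlow (n + 2) (by omega) (by exact_mod_cast hbelow)
    · have hdecay : a (n + 2) ≤ q⁻¹ * a (n + 1) := hhigh (n + 2) (by exact_mod_cast habove)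
      have hpow : 0 ≤ C * q ^ (-((n + 1 + 1 : ℕ) : ℝ)) := by positivity
      linarith

theorem pow_mul_le_of_recursion (hq : 1 ≤ q) (hc : 0 ≤ c) (ha0 : a 0 ≤ c) (s : ℕ) :
    q ^ s * a s ≤ q ^ 2 * (c * q + C * s) := by
  have hq0 : 0 < q := zero_lt_one.trans_le hq
  set S : Finset ℕ := {(m - 2).toNat, (m - 1).toNat}
  cases s with
  | zero =>
    calc q ^ 0 * a 0 ≤ 1 * c := by simpa using ha0
      _ ≤ q ^ 3 * c := by gcongr; exact one_le_pow₀ hq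
      _ = q ^ 2 * (c * q + C * (0 : ℕ)) := by push_cast; ring
  | succ n =>
    have hstart : q ^ 1 * a 1 ≤ q * c := by
      rw [pow_one]; gcongr; exact (ha_anti 0).trans ha0
    calc q ^ (n + 1) * a (n + 1)
        ≤ (∏ k ∈ range n, if k ∈ S then q else 1) * (q ^ 1 * a 1 + C * n) :=
          le_prod_mul_of_le_mul_add (u := fun n => q ^ (n + 1) * a (n + 1)) hC
            (fun k => by split_ifs <;> linarith)
            (pow_mul_le_ite_mul_add_of_recursion hC ha_anti hlow hhigh hq0) n
      _ ≤ (∏ k ∈ range n, if k ∈ S then q else 1) * (q * c + C * n) := by gcongr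
      _ ≤ q ^ 2 * (q * c + C * n) := by
          gcongr
          exact (prod_ite_mem_le_pow_card _ _ hq).trans (pow_le_pow_right₀ hq card_le_two)
      _ ≤ q ^ 2 * (c * q + C * ↑(n + 1)) := by
          gcongr q ^ 2 * ?_; push_cast; linarith

end Recursion

theorem statement10_general (q : ℝ) (hq : 2 ≤ q) (c C : ℝ) (hc : 0 ≤ c) (hC : 0 ≤ C)
    (a : ℕ → ℝ) (ha_anti : ∀ s, a (s + 1) ≤ a s)
    (ha0 : a 0 ≤ c)
    (hm : ∃ m : ℤ,
      (∀ s : ℕ, 2 ≤ s → (s : ℤ) ≤ m - 1 → a s ≤ q⁻¹ * a (s - 1) + C * q ^ (-(s : ℝ))) ∧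
      (∀ s : ℕ, m + 2 ≤ (s : ℤ) → a s ≤ q⁻¹ * a (s - 1))) :
    ∀ s : ℕ, a s ≤ (c * q + C) * ((s : ℝ) + 1) * q ^ ((2 : ℝ) - (s : ℝ)) := by
  obtain ⟨m, hlow, hhigh⟩ := hm
  intro s
  have hq0 : 0 < q := by linarith
  have hscaled := pow_mul_le_of_recursion hC ha_anti hlow hhigh (by linarith) hc ha0 s
  have hcoeff : c * q + C * s ≤ (c * q + C) * ((s : ℝ) + 1) := by
    have : 0 ≤ c * q * s := by positivity
    nlinarith
  rw [Real.rpow_sub hq0, Real.rpow_two, Real.rpow_natCast, mul_div_assoc',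
    le_div_iff₀ (by positivity)]
  calc a s * q ^ s = q ^ s * a s := mul_comm _ _
    _ ≤ q ^ 2 * (c * q + C * s) := hscaled
    _ ≤ (c * q + C) * ((s : ℝ) + 1) * q ^ 2 := by rw [mul_comm]; gcongr

/-- Elementary recursion estimate: Let `q ≥ 2` and `c, C ≥ 0` be real
numbers, and let `(a_s)_{s ∈ ℤ_{≥0}}` be a nonincreasing sequence of nonnegative reals
with `a₀ ≤ c`. Suppose there is an integer `m` such that
`a_s ≤ q⁻¹·a_{s−1} + C·q^{−s}` for all integers `2 ≤ s ≤ m−1`, and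
`a_s ≤ q⁻¹·a_{s−1}` for all integers `s ≥ m+2`. Then
`a_s ≤ (cq + C)·(s+1)·q^{2−s}` for every integer `s ≥ 0`. -/
theorem statement10 (q : ℝ) (hq : 2 ≤ q) (c C : ℝ) (hc : 0 ≤ c) (hC : 0 ≤ C)
    (a : ℕ → ℝ) (ha_nonneg : ∀ s, 0 ≤ a s) (ha_anti : ∀ s, a (s + 1) ≤ a s)
    (ha0 : a 0 ≤ c)
    (hm : ∃ m : ℤ,
      (∀ s : ℕ, 2 ≤ s → (s : ℤ) ≤ m - 1 → a s ≤ q⁻¹ * a (s - 1) + C * q ^ (-(s : ℝ))) ∧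
      (∀ s : ℕ, m + 2 ≤ (s : ℤ) → a s ≤ q⁻¹ * a (s - 1))) :
    ∀ s : ℕ, a s ≤ (c * q + C) * ((s : ℝ) + 1) * q ^ ((2 : ℝ) - (s : ℝ)) :=
  statement10_general q hq c C hc hC a ha_anti ha0 hm
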